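/- Let 𝒞 be a model category, X a cofibrant object, f, g, l : X ⟶ Y, and let H : f ⇝ g and H' : g ⇝ l be left Quillen homotopies with Quillen cylinders (W, d₀, d₁, s) and (W', d₀', d₁', s'). Let W'' be the pushout of d₁ : X ⟶ W and d₀' : X ⟶ W' with inclusions α : W ⟶ W'' and β : W' ⟶ W''. Then (W'', α∘d₀, β∘d₁', s'') is a Quillen cylinder for X, where s'' is induced by s and s', and the map h'' : W'' ⟶ Y induced by h and h' is a left Quillen homotopy from f to l. -/

import Mathlib

open CategoryTheory CategoryTheory.Limits

universe v u

/-- A (closed) model structure on a category, following Quillen's axioms M2–M5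
(M1, the existence of finite limits and colimits, is imposed separately as
`HasFiniteLimits`/`HasFiniteColimits` instances when needed). -/
structure ModelStruct (C : Type u) [Category.{v} C] where
  fib : MorphismProperty C
  cof : MorphismProperty C
  weq : MorphismProperty C
  fib_id : ∀ X : C, fib (𝟙 X)
  cof_id : ∀ X : C, cof (𝟙 X)
  weq_id : ∀ X : C, weq (𝟙 X)
  fib_comp : ∀ {X Y Z : C} (f : X ⟶ Y) (g : Y ⟶ Z), fib f → fib g → fib (f ≫ g)
  cof_comp : ∀ {X Y Z : C} (f : X ⟶ Y) (g : Y ⟶ Z), cof f → cof g → cof (f ≫ g)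
  weq_comp : ∀ {X Y Z : C} (f : X ⟶ Y) (g : Y ⟶ Z), weq f → weq g → weq (f ≫ g)
  weq_of_comp_left : ∀ {X Y Z : C} (f : X ⟶ Y) (g : Y ⟶ Z), weq f → weq (f ≫ g) → weq g
  weq_of_comp_right : ∀ {X Y Z : C} (f : X ⟶ Y) (g : Y ⟶ Z), weq g → weq (f ≫ g) → weq f
  fib_retract : ∀ {X Y X' Y' : C} (f : X ⟶ Y) (g : X' ⟶ Y') (a : X ⟶ X') (b : X' ⟶ X)
    (c : Y ⟶ Y') (d : Y' ⟶ Y), a ≫ b = 𝟙 X → c ≫ d = 𝟙 Y → f ≫ c = a ≫ g → g ≫ d = b ≫ f →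
    fib g → fib f
  cof_retract : ∀ {X Y X' Y' : C} (f : X ⟶ Y) (g : X' ⟶ Y') (a : X ⟶ X') (b : X' ⟶ X)
    (c : Y ⟶ Y') (d : Y' ⟶ Y), a ≫ b = 𝟙 X → c ≫ d = 𝟙 Y → f ≫ c = a ≫ g → g ≫ d = b ≫ f →
    cof g → cof f
  weq_retract : ∀ {X Y X' Y' : C} (f : X ⟶ Y) (g : X' ⟶ Y') (a : X ⟶ X') (b : X' ⟶ X)
    (c : Y ⟶ Y') (d : Y' ⟶ Y), a ≫ b = 𝟙 X → c ≫ d = 𝟙 Y → f ≫ c = a ≫ g → g ≫ d = b ≫ f →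
    weq g → weq f
  lift_triv_cof_fib : ∀ {A B X Y : C} (i : A ⟶ B) (p : X ⟶ Y),
    cof i → weq i → fib p → HasLiftingProperty i p
  lift_cof_triv_fib : ∀ {A B X Y : C} (i : A ⟶ B) (p : X ⟶ Y),
    cof i → fib p → weq p → HasLiftingProperty i p
  fact_cof_triv_fib : ∀ {X Y : C} (f : X ⟶ Y), ∃ (Z : C) (i : X ⟶ Z) (p : Z ⟶ Y),
    cof i ∧ fib p ∧ weq p ∧ i ≫ p = f
  fact_triv_cof_fib : ∀ {X Y : C} (f : X ⟶ Y), ∃ (Z : C) (i : X ⟶ Z) (p : Z ⟶ Y),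
    cof i ∧ weq i ∧ fib p ∧ i ≫ p = f

/-!
Since `X` is cofibrant, the cylinder inclusions `d₀`, `d₀'` are cofibrations, and `d₀'` is
moreover a weak equivalence (a section of `s'`). Hence its cobase change `α` is a trivial
cofibration, and `s''` is a weak equivalence by two-out-of-three since `α ≫ s'' = s`.
The inclusion `X ⨿ X ⟶ W''` factors as `d₀ ⨿ 𝟙 : X ⨿ X ⟶ W ⨿ X`, a cobase change of `d₀`,
followed by `W ⨿ X ⟶ W''`, a cobase change of `(d₀', d₁') : X ⨿ X ⟶ W'` along `d₁ ⨿ 𝟙`;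
both are cofibrations.
-/

lemma CategoryTheory.IsPushout.coprod_map_id_desc {C : Type u} [Category.{v} C]
    [HasBinaryCoproducts C] {Z A B P T : C} {f : Z ⟶ A} {g : Z ⟶ B} {i : A ⟶ P} {j : B ⟶ P}
    (h : IsPushout f g i j) (k : T ⟶ B) :
    IsPushout (coprod.map f (𝟙 T)) (coprod.desc g k) (coprod.desc i (k ≫ j)) j := by
  refine (IsPushout.of_left (h₁₁ := coprod.inl) (v₁₁ := f) (h₂₁ := coprod.inl)
    ?_ ?_ (IsPushout.of_coprod_inl_with_id f T)).flip
  · rw [coprod.inl_desc, coprod.inl_desc]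
    exact h.flip
  · ext <;> simp [h.w]

namespace ModelStruct

variable {C : Type u} [Category.{v} C] (M : ModelStruct C)

lemma cof_of_hasLiftingProperty {A B : C} (j : A ⟶ B)
    (H : ∀ ⦃E F : C⦄ (p : E ⟶ F), M.fib p → M.weq p → HasLiftingProperty j p) : M.cof j := by
  obtain ⟨Z, i, p, hi, hp, hpw, rfl⟩ := M.fact_cof_triv_fib j
  have := H p hp hpw
  have sq : CommSq i (i ≫ p) p (𝟙 B) := ⟨by rw [Category.comp_id]⟩
  exact M.cof_retract _ i (𝟙 A) (𝟙 A) sq.lift p (Category.id_comp _) sq.fac_right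
    (by rw [Category.id_comp, sq.fac_left]) (by rw [Category.id_comp]) hi

lemma cof_weq_of_hasLiftingProperty {A B : C} (j : A ⟶ B)
    (H : ∀ ⦃E F : C⦄ (p : E ⟶ F), M.fib p → HasLiftingProperty j p) : M.cof j ∧ M.weq j := by
  obtain ⟨Z, i, p, hi, hiw, hp, rfl⟩ := M.fact_triv_cof_fib j
  have := H p hp
  have sq : CommSq i (i ≫ p) p (𝟙 B) := ⟨by rw [Category.comp_id]⟩
  exact ⟨M.cof_retract _ i (𝟙 A) (𝟙 A) sq.lift p (Category.id_comp _) sq.fac_right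
      (by rw [Category.id_comp, sq.fac_left]) (by rw [Category.id_comp]) hi,
    M.weq_retract _ i (𝟙 A) (𝟙 A) sq.lift p (Category.id_comp _) sq.fac_right
      (by rw [Category.id_comp, sq.fac_left]) (by rw [Category.id_comp]) hiw⟩

section Pushout

variable {A B D P : C} {s : A ⟶ D} {f : A ⟶ B} {g : D ⟶ P} {t : B ⟶ P}

lemma cof_of_isPushout (h : IsPushout s f g t) (hf : M.cof f) : M.cof g :=
  M.cof_of_hasLiftingProperty g fun _ _ p hp hpw =>
    have := M.lift_cof_triv_fib f p hf hp hpw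
    h.hasLiftingProperty p

lemma cof_weq_of_isPushout (h : IsPushout s f g t) (hf : M.cof f) (hf' : M.weq f) :
    M.cof g ∧ M.weq g :=
  M.cof_weq_of_hasLiftingProperty g fun _ _ p hp =>
    have := M.lift_triv_cof_fib f p hf hf' hp
    h.hasLiftingProperty p

end Pushout

lemma cof_coprod_inl [HasInitial C] (X Y : C) [HasBinaryCoproduct X Y]
    (hY : M.cof (initial.to Y)) : M.cof (coprod.inl : X ⟶ X ⨿ Y) :=
  M.cof_of_isPushout (IsPushout.of_hasBinaryCoproduct' X Y) hY

lemma cof_left_of_cof_coprod_desc [HasInitial C] {A B Z : C} [HasBinaryCoproduct A B]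
    (a : A ⟶ Z) (b : B ⟶ Z) (hB : M.cof (initial.to B)) (hab : M.cof (coprod.desc a b)) :
    M.cof a := by
  rw [← coprod.inl_desc a b]
  exact M.cof_comp _ _ (M.cof_coprod_inl A B hB) hab

lemma weq_of_comp_eq_id {X W : C} {d : X ⟶ W} {s : W ⟶ X} (hs : M.weq s) (hds : d ≫ s = 𝟙 X) :
    M.weq d :=
  M.weq_of_comp_right d s hs (hds ▸ M.weq_id X)

lemma cof_coprod_desc_of_isPushout [HasBinaryCoproducts C] {X W W' W'' : C}
    {d₀ d₁ : X ⟶ W} {d₀' d₁' : X ⟶ W'} {α : W ⟶ W''} {β : W' ⟶ W''}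
    (hpo : IsPushout d₁ d₀' α β) (hd₀ : M.cof d₀) (hcof' : M.cof (coprod.desc d₀' d₁')) :
    M.cof (coprod.desc (d₀ ≫ α) (d₁' ≫ β)) := by
  have hfac : coprod.desc (d₀ ≫ α) (d₁' ≫ β) =
      coprod.map d₀ (𝟙 X) ≫ coprod.desc α (d₁' ≫ β) := by
    ext <;> simp
  rw [hfac]
  exact M.cof_comp _ _ (M.cof_of_isPushout (IsPushout.of_coprod_inl_with_id d₀ X) hd₀)
    (M.cof_of_isPushout (hpo.coprod_map_id_desc d₁') hcof')

end ModelStruct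

theorem homotopy_vcomp_pushout_general {C : Type u} [Category.{v} C] [HasFiniteColimits C]
    (M : ModelStruct C) {X Y : C} (f l : X ⟶ Y) (hX : M.cof (initial.to X))
    {W : C} (d₀ d₁ : X ⟶ W) (s : W ⟶ X)
    (hcof : M.cof (coprod.desc d₀ d₁)) (hs : M.weq s)
    (hs₀ : d₀ ≫ s = 𝟙 X)
    (h : W ⟶ Y) (hh₀ : d₀ ≫ h = f)
    {W' : C} (d₀' d₁' : X ⟶ W') (s' : W' ⟶ X)
    (hcof' : M.cof (coprod.desc d₀' d₁')) (hs' : M.weq s')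
    (hs₀' : d₀' ≫ s' = 𝟙 X) (hs₁' : d₁' ≫ s' = 𝟙 X)
    (h' : W' ⟶ Y) (hh₁' : d₁' ≫ h' = l)
    {W'' : C} (α : W ⟶ W'') (β : W' ⟶ W'') (hpo : IsPushout d₁ d₀' α β)
    (s'' : W'' ⟶ X) (hα : α ≫ s'' = s) (hβ : β ≫ s'' = s')
    (h'' : W'' ⟶ Y) (hαh : α ≫ h'' = h) (hβh : β ≫ h'' = h') :
    M.cof (coprod.desc (d₀ ≫ α) (d₁' ≫ β)) ∧ M.weq s'' ∧
    (d₀ ≫ α) ≫ s'' = 𝟙 X ∧ (d₁' ≫ β) ≫ s'' = 𝟙 X ∧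
    (d₀ ≫ α) ≫ h'' = f ∧ (d₁' ≫ β) ≫ h'' = l := by
  have hd₀ : M.cof d₀ := M.cof_left_of_cof_coprod_desc d₀ d₁ hX hcof
  have hd₀' : M.cof d₀' := M.cof_left_of_cof_coprod_desc d₀' d₁' hX hcof'
  have hα_weq : M.weq α :=
    (M.cof_weq_of_isPushout hpo hd₀' (M.weq_of_comp_eq_id hs' hs₀')).2
  refine ⟨M.cof_coprod_desc_of_isPushout hpo hd₀ hcof',
    M.weq_of_comp_left α s'' hα_weq (hα ▸ hs), ?_, ?_, ?_, ?_⟩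
  · rw [Category.assoc, hα, hs₀]
  · rw [Category.assoc, hβ, hs₁']
  · rw [Category.assoc, hαh, hh₀]
  · rw [Category.assoc, hβh, hh₁']

/-- Vertical composition of left Quillen homotopies via the pushout cylinder: if `X` is
cofibrant, `H = (W, d₀, d₁, s, h)` is a Quillen homotopy from `f` to `g` and
`H' = (W', d₀', d₁', s', h')` one from `g` to `l`, and `W''` is the pushout of `d₁` and `d₀'`
with inclusions `α`, `β`, then `(W'', α ∘ d₀, β ∘ d₁', s'')` is a Quillen cylinder for `X`
(where `s''` is induced by `s` and `s'`) and the induced map `h''` is a Quillen homotopy from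
`f` to `l`. -/
theorem homotopy_vcomp_pushout {C : Type u} [Category.{v} C] [HasFiniteColimits C]
    (M : ModelStruct C) {X Y : C} (f g l : X ⟶ Y) (hX : M.cof (initial.to X))
    {W : C} (d₀ d₁ : X ⟶ W) (s : W ⟶ X)
    (hcof : M.cof (coprod.desc d₀ d₁)) (hs : M.weq s)
    (hs₀ : d₀ ≫ s = 𝟙 X) (hs₁ : d₁ ≫ s = 𝟙 X)
    (h : W ⟶ Y) (hh₀ : d₀ ≫ h = f) (hh₁ : d₁ ≫ h = g)
    {W' : C} (d₀' d₁' : X ⟶ W') (s' : W' ⟶ X)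
    (hcof' : M.cof (coprod.desc d₀' d₁')) (hs' : M.weq s')
    (hs₀' : d₀' ≫ s' = 𝟙 X) (hs₁' : d₁' ≫ s' = 𝟙 X)
    (h' : W' ⟶ Y) (hh₀' : d₀' ≫ h' = g) (hh₁' : d₁' ≫ h' = l)
    {W'' : C} (α : W ⟶ W'') (β : W' ⟶ W'') (hpo : IsPushout d₁ d₀' α β)
    (s'' : W'' ⟶ X) (hα : α ≫ s'' = s) (hβ : β ≫ s'' = s')
    (h'' : W'' ⟶ Y) (hαh : α ≫ h'' = h) (hβh : β ≫ h'' = h') :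
    M.cof (coprod.desc (d₀ ≫ α) (d₁' ≫ β)) ∧ M.weq s'' ∧
    (d₀ ≫ α) ≫ s'' = 𝟙 X ∧ (d₁' ≫ β) ≫ s'' = 𝟙 X ∧
    (d₀ ≫ α) ≫ h'' = f ∧ (d₁' ≫ β) ≫ h'' = l :=
  homotopy_vcomp_pushout_general M f l hX d₀ d₁ s hcof hs hs₀ h hh₀ d₀' d₁' s' hcof' hs' hs₀' hs₁'
    h' hh₁' α β hpo s'' hα hβ h'' hαh hβh
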